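/- arXiv:1908.06005 — 2 statements merged into one kernel-verified Lean document; each statement's English description precedes it below -/
import Mathlib

section
/- Let Γ(s) = s+1 for s > 0 and Γ(s) = 1 for s ≤ 0, and let φ̃ ∈ C^∞(ℝ) be an even function with φ̃ ≥ 0, supp φ̃ ⊆ (−1,1) and ∫_ℝ φ̃ = 1. Set Γ_* = Γ * φ̃. Then: (i) Γ_* ∈ C^∞(ℝ); (ii) 1 ≤ Γ_*(s) ≤ |s| + 2 for all s ∈ ℝ; and (iii) Γ_*(s) − Γ_*(−s) = s for all s ∈ ℝ. -/
/-!
Since `Γ(s) = max(s, 0) + 1`, the difference `Γ(s) - Γ(-s)` is exactly `s`. Convolving with the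
even probability density `φ̃` preserves this up to the first moment of `φ̃`, which vanishes, so
`Γ_*(s) - Γ_*(-s) = s - ∫ u φ̃(u) du = s`. The bounds hold because `Γ_*(s)` is an average of the
values of `Γ` on `(s - 1, s + 1)`, all of which lie in `[1, |s| + 2]`, and smoothness is inherited
from `φ̃`.
-/

open MeasureTheory Real Filter
open scoped ENNReal NNReal

noncomputable section

/-- `Γ(s) = s+1` for `s > 0`, `Γ(s) = 1` for `s ≤ 0`. -/
def Γfun (s : ℝ) : ℝ := if 0 < s then s + 1 else 1

/-- Mollification `Γ_* = Γ * φ̃`. -/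
def Γstar (φ : ℝ → ℝ) (s : ℝ) : ℝ := ∫ u : ℝ, Γfun (s - u) * φ u

open Set Function
open scoped Convolution

lemma Γfun_eq_max (s : ℝ) : Γfun s = max s 0 + 1 := by
  unfold Γfun
  split_ifs with h
  · rw [max_eq_left h.le]
  · rw [max_eq_right (not_lt.mp h), zero_add]

@[fun_prop]
lemma continuous_Γfun : Continuous Γfun := by
  simp only [funext Γfun_eq_max]
  fun_prop

lemma one_le_Γfun (s : ℝ) : 1 ≤ Γfun s := by
  rw [Γfun_eq_max]
  linarith [le_max_right s 0]

lemma Γfun_le_abs_add_one (s : ℝ) : Γfun s ≤ |s| + 1 := by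
  rw [Γfun_eq_max]
  gcongr
  exact max_le (le_abs_self s) (abs_nonneg s)

lemma Γfun_sub_Γfun_neg (s : ℝ) : Γfun s - Γfun (-s) = s := by
  rw [Γfun_eq_max, Γfun_eq_max, add_sub_add_right_eq_sub]
  exact max_zero_sub_max_neg_zero_eq_self s

theorem integral_eq_zero_of_odd {G E : Type*} [MeasurableSpace G] [AddGroup G] [MeasurableNeg G]
    [NormedAddCommGroup E] [NormedSpace ℝ E] (μ : Measure G) [μ.IsNegInvariant] {f : G → E}
    (hf : Function.Odd f) : ∫ x, f x ∂μ = 0 := by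
  have : IsAddTorsionFree E := .of_isTorsionFree ℝ E
  have h := integral_neg_eq_self f μ
  simp only [hf _, integral_neg] at h
  exact neg_eq_self.mp h

section ProbabilityDensity

variable {α : Type*} [MeasurableSpace α] {μ : Measure α} {φ g : α → ℝ} {c : ℝ}

lemma le_integral_mul_of_le_on_support (hφ_nonneg : 0 ≤ φ) (hφ_int : Integrable φ μ)
    (hφ_one : ∫ x, φ x ∂μ = 1) (hgφ : Integrable (fun x ↦ g x * φ x) μ)
    (hg : ∀ x ∈ support φ, c ≤ g x) : c ≤ ∫ x, g x * φ x ∂μ := by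
  calc c = ∫ x, c * φ x ∂μ := by rw [integral_const_mul, hφ_one, mul_one]
    _ ≤ ∫ x, g x * φ x ∂μ := by
      refine integral_mono (hφ_int.const_mul c) hgφ fun x ↦ ?_
      by_cases hx : φ x = 0
      · simp [hx]
      · exact mul_le_mul_of_nonneg_right (hg x hx) (hφ_nonneg x)

lemma integral_mul_le_of_le_on_support (hφ_nonneg : 0 ≤ φ) (hφ_int : Integrable φ μ)
    (hφ_one : ∫ x, φ x ∂μ = 1) (hgφ : Integrable (fun x ↦ g x * φ x) μ)
    (hg : ∀ x ∈ support φ, g x ≤ c) : ∫ x, g x * φ x ∂μ ≤ c := by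
  calc ∫ x, g x * φ x ∂μ
      ≤ ∫ x, c * φ x ∂μ := by
        refine integral_mono hgφ (hφ_int.const_mul c) fun x ↦ ?_
        by_cases hx : φ x = 0
        · simp [hx]
        · exact mul_le_mul_of_nonneg_right (hg x hx) (hφ_nonneg x)
    _ = c := by rw [integral_const_mul, hφ_one, mul_one]

end ProbabilityDensity

lemma integrable_mul_of_hasCompactSupport {g φ : ℝ → ℝ} (hg : Continuous g) (hφ : Continuous φ)
    (hφc : HasCompactSupport φ) : Integrable (fun u ↦ g u * φ u) :=
  (hg.mul hφ).integrable_of_hasCompactSupport hφc.mul_left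

section Γstar

variable {φ : ℝ → ℝ}

lemma Γstar_eq_convolution (φ : ℝ → ℝ) :
    Γstar φ = φ ⋆[(ContinuousLinearMap.mul ℝ ℝ).flip, volume] Γfun :=
  rfl

lemma contDiff_Γstar {n : ℕ∞} (hφ : ContDiff ℝ n φ) (hφc : HasCompactSupport φ) :
    ContDiff ℝ n (Γstar φ) := by
  rw [Γstar_eq_convolution]
  exact hφc.contDiff_convolution_left _ hφ (continuous_Γfun.locallyIntegrable (μ := volume))

lemma Γstar_neg (hφ_even : Function.Even φ) (s : ℝ) :
    Γstar φ (-s) = ∫ u, Γfun (-(s - u)) * φ u := by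
  rw [Γstar, ← integral_neg_eq_self]
  simp only [hφ_even _, sub_neg_eq_add, neg_sub']

lemma one_le_Γstar (hφ_cont : Continuous φ) (hφc : HasCompactSupport φ) (hφ_nonneg : 0 ≤ φ)
    (hφ_one : ∫ u, φ u = 1) (s : ℝ) : 1 ≤ Γstar φ s :=
  le_integral_mul_of_le_on_support hφ_nonneg (hφ_cont.integrable_of_hasCompactSupport hφc) hφ_one
    (integrable_mul_of_hasCompactSupport (by fun_prop) hφ_cont hφc) fun _ _ ↦ one_le_Γfun _

lemma Γstar_le_abs_add_two (hφ_cont : Continuous φ) (hφ_nonneg : 0 ≤ φ)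
    (hφ_supp : support φ ⊆ Icc (-1) 1) (hφ_one : ∫ u, φ u = 1) (s : ℝ) :
    Γstar φ s ≤ |s| + 2 := by
  have hφc : HasCompactSupport φ := isCompact_Icc.closure_of_subset hφ_supp
  refine integral_mul_le_of_le_on_support hφ_nonneg (hφ_cont.integrable_of_hasCompactSupport hφc)
    hφ_one (integrable_mul_of_hasCompactSupport (by fun_prop) hφ_cont hφc) fun u hu ↦ ?_
  have hu : |u| ≤ 1 := abs_le.mpr (hφ_supp hu)
  calc Γfun (s - u) ≤ |s - u| + 1 := Γfun_le_abs_add_one _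
    _ ≤ |s| + |u| + 1 := by gcongr; exact abs_sub s u
    _ ≤ |s| + 2 := by linarith

lemma Γstar_sub_Γstar_neg (hφ_cont : Continuous φ) (hφc : HasCompactSupport φ)
    (hφ_even : Function.Even φ) (hφ_one : ∫ u, φ u = 1) (s : ℝ) :
    Γstar φ s - Γstar φ (-s) = s := by
  have hint {g : ℝ → ℝ} (hg : Continuous g) : Integrable (fun u ↦ g u * φ u) :=
    integrable_mul_of_hasCompactSupport hg hφ_cont hφc
  have hmoment : ∫ u, u * φ u = 0 :=
    integral_eq_zero_of_odd volume fun u ↦ by rw [hφ_even u, neg_mul]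
  calc Γstar φ s - Γstar φ (-s) = ∫ u, (Γfun (s - u) - Γfun (-(s - u))) * φ u := by
        rw [Γstar_neg hφ_even, Γstar, ← integral_sub (hint (by fun_prop)) (hint (by fun_prop))]
        simp only [sub_mul]
    _ = ∫ u, (s * φ u - u * φ u) := by simp only [Γfun_sub_Γfun_neg, sub_mul]
    _ = s := by
      rw [integral_sub (hint continuous_const) (hint (g := fun u ↦ u) continuous_id),
        integral_const_mul, hφ_one, hmoment, mul_one, sub_zero]

end Γstar

/-- Properties of the mollified cutoff `Γ_*`:
it is smooth, satisfies `1 ≤ Γ_*(s) ≤ |s| + 2`, and `Γ_*(s) − Γ_*(−s) = s`. -/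
theorem statement5 (φ : ℝ → ℝ)
    (hφ_smooth : ContDiff ℝ (⊤ : ℕ∞) φ)
    (hφ_even : ∀ s, φ (-s) = φ s)
    (hφ_nonneg : ∀ s, 0 ≤ φ s)
    (hφ_supp : Function.support φ ⊆ Set.Ioo (-1) 1)
    (hφ_int : (∫ u : ℝ, φ u) = 1) :
    ContDiff ℝ (⊤ : ℕ∞) (Γstar φ) ∧
    (∀ s : ℝ, 1 ≤ Γstar φ s ∧ Γstar φ s ≤ |s| + 2) ∧
    (∀ s : ℝ, Γstar φ s - Γstar φ (-s) = s) := by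
  have hφ_cont : Continuous φ := hφ_smooth.continuous
  have hφ_supp' : support φ ⊆ Icc (-1) 1 := hφ_supp.trans Ioo_subset_Icc_self
  have hφc : HasCompactSupport φ := isCompact_Icc.closure_of_subset hφ_supp'
  exact ⟨contDiff_Γstar hφ_smooth hφc,
    fun s ↦ ⟨one_le_Γstar hφ_cont hφc hφ_nonneg hφ_int s,
      Γstar_le_abs_add_two hφ_cont hφ_nonneg hφ_supp' hφ_int s⟩,
    Γstar_sub_Γstar_neg hφ_cont hφc hφ_even hφ_int⟩
end
end

section
/- Let r, μ ∈ ℤ⁺ and λ, σ be such that σ^{−1} ∈ ℤ⁺, λ is a positive integer multiple of 5, and λσ is a positive integer multiple of 5, and let w_k = w_{k,λ,σ,r,μ} be the intermittent 2D stationary flows. Then: (i) for any coefficients {a_k ∈ ℂ : k ∈ Λ} with a_{−k} = conj(a_k) for all k ∈ Λ, the function W(t,x) = Σ_{k∈Λ} a_k w_k(t,x) is real valued; (ii) for every k ∈ Λ and every t, ⨍_{𝕋²} w_k(t,x) ⊘ w_{−k}(t,x) dx = −(k ⊘ k); and consequently (iii) if {γ_k : k ∈ Λ} are functions on the space M of real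 symmetric trace-free 2×2 matrices satisfying R = Σ_{k∈Λ} (γ_k(R))²(k ⊘ k) for all R ∈ M, then for every R ∈ M and every t, Σ_{k∈Λ} (γ_k(R))² ⨍_{𝕋²} w_k ⊘ w_{−k} dx = −R. -/
open MeasureTheory Real Filter Matrix
open scoped ENNReal NNReal

noncomputable section

/-- Points of the torus `𝕋² = ℝ²/(2πℤ)²` are represented by points of `ℝ²`;
functions on `𝕋²` are `2π`-periodic functions on `ℝ²`. -/
abbrev Vec2 := Fin 2 → ℝ

/-- The `j`-th standard basis vector of `ℝ²`. -/
def e2 (j : Fin 2) : Vec2 := Pi.single j 1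

/-- A fundamental domain for `𝕋²`. -/
def Q2 : Set Vec2 := Set.univ.pi fun _ => Set.Ioc (0:ℝ) (2*π)

/-- Lebesgue measure on `𝕋²`, realized on the fundamental domain. -/
def μT : Measure Vec2 := volume.restrict Q2

/-- `2π`-periodicity in each coordinate: a function on `𝕋²`. -/
def Per {α : Type*} (f : Vec2 → α) : Prop :=
  ∀ (x : Vec2) (j : Fin 2), f (x + (2*π) • e2 j) = f x

/-- Divergence of a vector field. -/
def divg (f : Vec2 → Vec2) (x : Vec2) : ℝ := ∑ j, fderiv ℝ (fun y => f y j) x (e2 j)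

/-- The set `Λ⁺` of direction vectors. -/
def Λp : Finset Vec2 :=
  { ![3/5, 4/5], ![3/5, -4/5], ![4/5, 3/5], ![4/5, -3/5] }

/-- The set `Λ⁻ = −Λ⁺`. -/
def Λm : Finset Vec2 := Λp.image (fun k => -k)

/-- The set of directions `Λ = Λ⁺ ∪ Λ⁻`. -/
def Λdir : Finset Vec2 := Λp ∪ Λm

/-- `k⊥ = (−k₂, k₁)`. -/
def perp (k : Vec2) : Vec2 := ![-(k 1), k 0]

/-- Trace-free part of the tensor product of two real vectors:
`f ⊘ g = f ⊗ g − ½(f·g) I₂`. -/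
def ot (f g : Vec2) : Fin 2 → Fin 2 → ℝ :=
  fun i j => f i * g j - (if i = j then (f ⬝ᵥ g) / 2 else 0)

/-- Trace-free part of the tensor product of two complex vectors. -/
def otC (f g : Fin 2 → ℂ) : Fin 2 → Fin 2 → ℂ :=
  fun i j => f i * g j - (if i = j then (f ⬝ᵥ g) / 2 else 0)

/-- The 2D stationary flow `b_{k,λ}(x) = i k⊥ e^{iλ k·x}`. -/
def bflow (k : Vec2) (l : ℝ) (x : Vec2) : Fin 2 → ℂ :=
  fun i => Complex.I * ((perp k i : ℝ) : ℂ) * Complex.exp (Complex.I * ((l * (k ⬝ᵥ x) : ℝ) : ℂ))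

/-- Its potential `ψ_{k,λ}(x) = λ⁻¹ e^{iλ k·x}`. -/
def ψflow (k : Vec2) (l : ℝ) (x : Vec2) : ℂ :=
  ((l : ℂ))⁻¹ * Complex.exp (Complex.I * ((l * (k ⬝ᵥ x) : ℝ) : ℂ))

/-- Partial derivative `∂_j` of a complex-valued function on `ℝ²`. -/
def pdC (j : Fin 2) (f : Vec2 → ℂ) : Vec2 → ℂ := fun x => fderiv ℝ f x (e2 j)

/-- The index set `Ω_r = {k ∈ ℤ² : |k₁| ≤ r, |k₂| ≤ r}`. -/
def Ωr (r : ℕ) : Finset (ℤ × ℤ) := Finset.Icc (-(r:ℤ)) r ×ˢ Finset.Icc (-(r:ℤ)) r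

/-- The 2D Dirichlet kernel `D_r(x) = (2r+1)⁻¹ Σ_{k∈Ω_r} e^{ik·x}` on `𝕋²`. -/
def Dker (r : ℕ) (x : Vec2) : ℂ :=
  (((2*(r:ℝ)+1) : ℝ) : ℂ)⁻¹ *
    ∑ k ∈ Ωr r, Complex.exp (Complex.I * (((k.1 : ℝ) * x 0 + (k.2 : ℝ) * x 1 : ℝ) : ℂ))

/-- The 2D Dirichlet kernel as a real-valued function of two real arguments. -/
def DkerR (r : ℕ) (a b : ℝ) : ℝ :=
  ((((2*(r:ℝ)+1) : ℝ) : ℂ)⁻¹ *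
    ∑ k ∈ Ωr r, Complex.exp (Complex.I * (((k.1 : ℝ) * a + (k.2 : ℝ) * b : ℝ) : ℂ))).re

/-- The directed–rescaled Dirichlet kernel with temporal shift:
`η_{k,λ,σ,r,μ}(t,x) = D_r(λσ(k·x + μt), λσ k⊥·x)` for `k ∈ Λ⁺`, and
`η_{k,λ,σ,r,μ} = η_{−k,λ,σ,r,μ}` for `k ∈ Λ⁻`. -/
def ηfun (k : Vec2) (l σ : ℝ) (r : ℕ) (μ : ℝ) (t : ℝ) (x : Vec2) : ℝ :=
  if k ∈ Λp then
    DkerR r (l * σ * (k ⬝ᵥ x + μ * t)) (l * σ * (perp k ⬝ᵥ x))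
  else
    DkerR r (l * σ * ((-k) ⬝ᵥ x + μ * t)) (l * σ * (perp (-k) ⬝ᵥ x))

/-- The intermittent 2D stationary flow `w_{k,λ,σ,r,μ}(t,x) = η_{k,λ,σ,r,μ}(t,x) b_{k,λ}(x)`. -/
def wflow (k : Vec2) (l σ : ℝ) (r : ℕ) (μ : ℝ) (t : ℝ) (x : Vec2) : Fin 2 → ℂ :=
  fun i => ((ηfun k l σ r μ t x : ℝ) : ℂ) * bflow k l x i

/-! Because `η_{−k} = η_k` and `b_{−k} = conj b_k`, we have `w_{−k} = conj w_k`; this gives (i)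
and makes `w_k ⊘ w_{−k} = η_k² (k⊥ ⊘ k⊥) = −η_k² (k ⊘ k)` pointwise. For (ii) it remains to see
that `⨍ η_k² = 1`. Since `5k ∈ ℤ²` and `λσ ∈ 5ℤ`, `η_k` is `D_r` composed with an injective
integer-linear map of the torus plus a shift; expanding `D_r²` as a double sum of characters,
only the pairs of opposite frequencies `(p, −p)` survive averaging, each contributing
`(2r+1)⁻²`, and there are `(2r+1)²` of them. Summing (ii) against `R = Σ γ_k² (k ⊘ k)`
gives (iii). -/

open ComplexConjugate

theorem Finset.sum_comp_neg_of_neg_mem {α M : Type*} [InvolutiveNeg α] [AddCommMonoid M]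
    {s : Finset α} (hs : ∀ k ∈ s, -k ∈ s) (f : α → M) :
    ∑ k ∈ s, f (-k) = ∑ k ∈ s, f k :=
  Finset.sum_equiv (Equiv.neg α) (fun k => ⟨hs k, fun h => by simpa using hs _ h⟩)
    fun _ _ => rfl

theorem Finset.conj_sum_of_neg_mem {α : Type*} [InvolutiveNeg α] {s : Finset α}
    (hs : ∀ k ∈ s, -k ∈ s) {f : α → ℂ} (hf : ∀ k ∈ s, f (-k) = conj (f k)) :
    conj (∑ k ∈ s, f k) = ∑ k ∈ s, f k := by
  rw [map_sum, ← Finset.sum_comp_neg_of_neg_mem hs f]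
  exact Finset.sum_congr rfl fun k hk => (hf k hk).symm

theorem setIntegral_Ioc_exp_int_mul_I (n : ℤ) :
    ∫ s in Set.Ioc 0 (2 * π), Complex.exp (Complex.I * ((n * s : ℝ) : ℂ))
      = if n = 0 then ((2 * π : ℝ) : ℂ) else 0 := by
  split_ifs with hn
  · simp [hn, Real.volume_real_Ioc_of_le (by positivity : (0 : ℝ) ≤ 2 * π)]
  · have hc : Complex.I * n ≠ 0 := mul_ne_zero Complex.I_ne_zero (by exact_mod_cast hn)
    have hperiod : Complex.exp (Complex.I * n * ((2 * π : ℝ) : ℂ)) = 1 := by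
      rw [← Complex.exp_int_mul_two_pi_mul_I n]; push_cast; ring_nf
    simp_rw [← intervalIntegral.integral_of_le (by positivity : (0 : ℝ) ≤ 2 * π),
      Complex.ofReal_mul, Complex.ofReal_intCast, ← mul_assoc]
    rw [integral_exp_mul_complex hc, hperiod]
    simp

theorem setIntegral_cube_exp_int (ι : Type*) [Fintype ι] (ν : ι → ℤ) :
    ∫ x in Set.univ.pi fun _ : ι => Set.Ioc 0 (2 * π),
        Complex.exp (Complex.I * ((∑ i, ν i * x i : ℝ) : ℂ))
      = if ν = 0 then ((2 * π : ℝ) : ℂ) ^ Fintype.card ι else 0 := by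
  have hprod : ∀ x : ι → ℝ, Complex.exp (Complex.I * ((∑ i, ν i * x i : ℝ) : ℂ))
      = ∏ i, Complex.exp (Complex.I * ((ν i * x i : ℝ) : ℂ)) := fun x => by
    rw [← Complex.exp_sum, Complex.ofReal_sum, Finset.mul_sum]
  simp_rw [hprod]
  rw [volume_pi, Measure.restrict_pi_pi,
    integral_fintype_prod_eq_prod fun i s => Complex.exp (Complex.I * ((ν i * s : ℝ) : ℂ))]
  simp_rw [setIntegral_Ioc_exp_int_mul_I]
  split_ifs with hν
  · simp only [hν, Pi.zero_apply, if_true, Finset.prod_const, Finset.card_univ]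
  · obtain ⟨i, hi⟩ := Function.ne_iff.mp hν
    exact Finset.prod_eq_zero (Finset.mem_univ i) (if_neg hi)

theorem Continuous.integrableOn_cube {ι E : Type*} [Fintype ι] [NormedAddCommGroup E]
    {f : (ι → ℝ) → E} (hf : Continuous f) (a b : ℝ) :
    IntegrableOn f (Set.univ.pi fun _ => Set.Ioc a b) :=
  (hf.continuousOn.integrableOn_compact (isCompact_univ_pi fun _ => isCompact_Icc)).mono_set
    (Set.pi_mono fun _ _ => Set.Ioc_subset_Icc_self)

theorem neg_mem_Ωr {r : ℕ} {p : ℤ × ℤ} (hp : p ∈ Ωr r) : -p ∈ Ωr r := by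
  simp only [Ωr, Finset.mem_product, Finset.mem_Icc, Prod.fst_neg, Prod.snd_neg] at hp ⊢
  omega

theorem card_Ωr (r : ℕ) : (Ωr r).card = (2 * r + 1) ^ 2 := by
  rw [Ωr, Finset.card_product, Int.card_Icc, sq]
  congr <;> omega

theorem ofReal_DkerR (r : ℕ) (a b : ℝ) :
    ((DkerR r a b : ℝ) : ℂ) = (((2 * (r : ℝ) + 1) : ℝ) : ℂ)⁻¹ *
      ∑ p ∈ Ωr r, Complex.exp (Complex.I * (((p.1 : ℝ) * a + (p.2 : ℝ) * b : ℝ) : ℂ)) := by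
  refine Complex.conj_eq_iff_re.mp ?_
  rw [map_mul, map_inv₀, Complex.conj_ofReal,
    Finset.conj_sum_of_neg_mem fun _ => neg_mem_Ωr]
  intro p _
  rw [← Complex.exp_conj, map_mul, Complex.conj_I, Complex.conj_ofReal, Prod.fst_neg,
    Prod.snd_neg]
  push_cast; ring_nf

section PullbackChar

variable {ι : Type*} [Fintype ι]

-- The character `(a, b) ↦ e^{i(p₁a + p₂b)}` of `𝕋²` pulled back along `x ↦ (α·x + c, β·x + c')`.
def pullbackChar (α β : ι → ℤ) (c c' : ℝ) (p : ℤ × ℤ) (x : ι → ℝ) : ℂ :=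
  Complex.exp (Complex.I *
    (((p.1 : ℝ) * (∑ i, (α i : ℝ) * x i + c) + (p.2 : ℝ) * (∑ i, (β i : ℝ) * x i + c') : ℝ) : ℂ))

theorem continuous_pullbackChar (α β : ι → ℤ) (c c' : ℝ) (p : ℤ × ℤ) :
    Continuous (pullbackChar α β c c' p) := by
  unfold pullbackChar; fun_prop

theorem pullbackChar_mul_pullbackChar (α β : ι → ℤ) (c c' : ℝ) (p q : ℤ × ℤ) (x : ι → ℝ) :
    pullbackChar α β c c' p x * pullbackChar α β c c' q x
      = Complex.exp (Complex.I * (((p.1 + q.1 : ℤ) * c + (p.2 + q.2 : ℤ) * c' : ℝ) : ℂ))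
        * Complex.exp (Complex.I *
            ((∑ i, (((p.1 + q.1) • α + (p.2 + q.2) • β) i : ℝ) * x i : ℝ) : ℂ)) := by
  simp only [pullbackChar, Pi.add_apply, Pi.smul_apply, smul_eq_mul, Int.cast_add, Int.cast_mul,
    add_mul, mul_assoc, Finset.sum_add_distrib, ← Finset.mul_sum, ← Complex.exp_add]
  congr 1
  push_cast; ring

theorem setIntegral_cube_pullbackChar_mul {α β : ι → ℤ}
    (hαβ : ∀ m n : ℤ, m • α + n • β = 0 → m = 0 ∧ n = 0) (c c' : ℝ) (p q : ℤ × ℤ) :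
    ∫ x in Set.univ.pi fun _ : ι => Set.Ioc 0 (2 * π),
        pullbackChar α β c c' p x * pullbackChar α β c c' q x
      = if q = -p then ((2 * π : ℝ) : ℂ) ^ Fintype.card ι else 0 := by
  have hν : (p.1 + q.1) • α + (p.2 + q.2) • β = 0 ↔ q = -p := by
    refine ⟨fun h => ?_, fun h => by simp [h]⟩
    obtain ⟨h1, h2⟩ := hαβ _ _ h
    exact Prod.ext (by simp; omega) (by simp; omega)
  simp_rw [pullbackChar_mul_pullbackChar, integral_const_mul, setIntegral_cube_exp_int, hν]
  split_ifs with h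
  · subst h; simp
  · rw [mul_zero]

theorem ofReal_DkerR_sq (r : ℕ) (α β : ι → ℤ) (c c' : ℝ) (x : ι → ℝ) :
    ((DkerR r (∑ i, (α i : ℝ) * x i + c) (∑ i, (β i : ℝ) * x i + c') ^ 2 : ℝ) : ℂ)
      = (((2 * (r : ℝ) + 1) : ℝ) : ℂ)⁻¹ ^ 2 * ∑ p ∈ Ωr r, ∑ q ∈ Ωr r,
          pullbackChar α β c c' p x * pullbackChar α β c c' q x := by
  rw [Complex.ofReal_pow, ofReal_DkerR, mul_pow, sq (Finset.sum _ _), Finset.sum_mul_sum]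
  rfl

theorem integral_cube_DkerR_sq (r : ℕ) {α β : ι → ℤ}
    (hαβ : ∀ m n : ℤ, m • α + n • β = 0 → m = 0 ∧ n = 0) (c c' : ℝ) :
    ∫ x in Set.univ.pi fun _ : ι => Set.Ioc 0 (2 * π),
        DkerR r (∑ i, (α i : ℝ) * x i + c) (∑ i, (β i : ℝ) * x i + c') ^ 2
      = (2 * π) ^ Fintype.card ι := by
  have hint : ∀ p q, IntegrableOn (fun x => pullbackChar α β c c' p x * pullbackChar α β c c' q x)
      (Set.univ.pi fun _ : ι => Set.Ioc 0 (2 * π)) := fun p q =>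
    ((continuous_pullbackChar α β c c' p).mul
      (continuous_pullbackChar α β c c' q)).integrableOn_cube _ _
  apply Complex.ofReal_injective
  rw [← integral_complex_ofReal]
  simp_rw [ofReal_DkerR_sq]
  rw [integral_const_mul,
    integral_finsetSum _ fun p _ => integrable_finsetSum _ fun q _ => hint p q]
  simp_rw [integral_finsetSum _ fun q _ => hint _ q, setIntegral_cube_pullbackChar_mul hαβ]
  rw [Finset.sum_congr rfl fun p hp => by rw [Finset.sum_ite_eq', if_pos (neg_mem_Ωr hp)],
    Finset.sum_const, card_Ωr, nsmul_eq_mul]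
  have h2r : (2 * r + 1 : ℂ) ≠ 0 := by exact_mod_cast (by positivity : 2 * (r : ℝ) + 1 ≠ 0)
  push_cast
  field_simp

end PullbackChar

theorem mem_Λdir_iff {k : Vec2} : k ∈ Λdir ↔ k ∈ Λp ∨ -k ∈ Λp := by
  simp [Λdir, Λm, neg_eq_iff_eq_neg]

theorem neg_mem_Λdir {k : Vec2} (hk : k ∈ Λdir) : -k ∈ Λdir := by
  rw [mem_Λdir_iff, neg_neg] at *
  exact hk.symm

theorem pos_of_mem_Λp {k : Vec2} (hk : k ∈ Λp) : 0 < k 0 := by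
  simp only [Λp, Finset.mem_insert, Finset.mem_singleton] at hk
  rcases hk with rfl | rfl | rfl | rfl <;> norm_num

theorem neg_mem_Λp_iff {k : Vec2} (hk : k ∈ Λdir) : -k ∈ Λp ↔ k ∉ Λp := by
  refine ⟨fun hneg hpos => ?_, (mem_Λdir_iff.mp hk).resolve_left⟩
  linarith [pos_of_mem_Λp hneg, pos_of_mem_Λp hpos, show (-k) 0 = -k 0 from rfl]

theorem exists_int_coords_of_mem_Λdir {k : Vec2} (hk : k ∈ Λdir) :
    ∃ a b : ℤ, k = ![(a : ℝ) / 5, (b : ℝ) / 5] ∧ a ^ 2 + b ^ 2 = 25 := by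
  simp only [Λdir, Λm, Λp, Finset.mem_union, Finset.mem_image, Finset.mem_insert,
    Finset.mem_singleton, exists_eq_or_imp, exists_eq_left] at hk
  rcases hk with (rfl | rfl | rfl | rfl) | (rfl | rfl | rfl | rfl)
  exacts [⟨3, 4, by norm_num⟩, ⟨3, -4, by norm_num⟩, ⟨4, 3, by norm_num⟩, ⟨4, -3, by norm_num⟩,
    ⟨-3, -4, by norm_num [Matrix.neg_cons]⟩, ⟨-3, 4, by norm_num [Matrix.neg_cons]⟩,
    ⟨-4, -3, by norm_num [Matrix.neg_cons]⟩, ⟨-4, 3, by norm_num [Matrix.neg_cons]⟩]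

theorem perp_neg (k : Vec2) : perp (-k) = -perp k := by
  ext i; fin_cases i <;> simp [perp]

theorem ot_perp_perp (k : Vec2) : ot (perp k) (perp k) = -ot k k := by
  ext i j
  fin_cases i <;> fin_cases j <;> simp [ot, perp, dotProduct, Fin.sum_univ_two] <;> ring

theorem ηfun_neg {k : Vec2} (hk : k ∈ Λdir) (l σ : ℝ) (r : ℕ) (μ t : ℝ) (x : Vec2) :
    ηfun (-k) l σ r μ t x = ηfun k l σ r μ t x := by
  by_cases hkp : k ∈ Λp
  · rw [ηfun, ηfun, if_neg fun h => (neg_mem_Λp_iff hk).mp h hkp, if_pos hkp, neg_neg]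
  · rw [ηfun, ηfun, if_pos ((neg_mem_Λp_iff hk).mpr hkp), if_neg hkp]

theorem bflow_neg (k : Vec2) (l : ℝ) (x : Vec2) (i : Fin 2) :
    bflow (-k) l x i = conj (bflow k l x i) := by
  simp only [bflow, perp_neg, neg_dotProduct, Pi.neg_apply, map_mul, Complex.conj_I,
    Complex.conj_ofReal, ← Complex.exp_conj]
  push_cast
  ring_nf

theorem bflow_mul_conj (k : Vec2) (l : ℝ) (x : Vec2) (i j : Fin 2) :
    bflow k l x i * conj (bflow k l x j) = ((perp k i * perp k j : ℝ) : ℂ) := by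
  set u := Complex.I * Complex.exp (Complex.I * ((l * (k ⬝ᵥ x) : ℝ) : ℂ))
  have hb : ∀ i, bflow k l x i = (perp k i : ℂ) * u := fun i => by simp only [bflow, u]; ring
  have hu : ‖u‖ = 1 := by
    rw [norm_mul, Complex.norm_I, Complex.norm_exp_I_mul_ofReal, one_mul]
  rw [hb, hb, map_mul, Complex.conj_ofReal, mul_mul_mul_comm, Complex.mul_conj', hu]
  push_cast; ring

theorem wflow_neg {k : Vec2} (hk : k ∈ Λdir) (l σ : ℝ) (r : ℕ) (μ t : ℝ) (x : Vec2)
    (i : Fin 2) : wflow (-k) l σ r μ t x i = conj (wflow k l σ r μ t x i) := by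
  rw [wflow, wflow, ηfun_neg hk, bflow_neg, map_mul, Complex.conj_ofReal]

theorem im_sum_mul_wflow_eq_zero (l σ : ℝ) (r : ℕ) (μ t : ℝ) {a : Vec2 → ℂ}
    (ha : ∀ k ∈ Λdir, a (-k) = conj (a k)) (x : Vec2) (i : Fin 2) :
    (∑ k ∈ Λdir, a k * wflow k l σ r μ t x i).im = 0 :=
  Complex.conj_eq_iff_im.mp <| Finset.conj_sum_of_neg_mem (fun _ => neg_mem_Λdir)
    fun k hk => by rw [ha k hk, wflow_neg hk, map_mul]

theorem otC_eq_of_mul_eq {f g : Fin 2 → ℂ} {c : ℝ} {u : Vec2}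
    (h : ∀ i j, f i * g j = ((c * (u i * u j) : ℝ) : ℂ)) :
    otC f g = c • fun i j => ((ot u u i j : ℝ) : ℂ) := by
  ext i j
  simp only [otC, ot, dotProduct, Fin.sum_univ_two, h, Pi.smul_apply, Complex.real_smul]
  split_ifs <;> push_cast <;> ring

theorem otC_wflow_wflow_neg {k : Vec2} (hk : k ∈ Λdir) (l σ : ℝ) (r : ℕ) (μ t : ℝ)
    (x : Vec2) :
    otC (wflow k l σ r μ t x) (wflow (-k) l σ r μ t x)
      = ηfun k l σ r μ t x ^ 2 • fun i j => ((-ot k k i j : ℝ) : ℂ) := by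
  rw [otC_eq_of_mul_eq (c := ηfun k l σ r μ t x ^ 2) (u := perp k) fun i j => ?_]
  · simp only [ot_perp_perp, Pi.neg_apply]
  · rw [wflow_neg hk, wflow, wflow, map_mul, Complex.conj_ofReal,
      mul_mul_mul_comm, bflow_mul_conj]
    push_cast; ring

theorem integral_DkerR_sq_of_mem_Λdir {k : Vec2} (hk : k ∈ Λdir) {l σ : ℝ} {N : ℤ}
    (hN : N ≠ 0) (hlσ : l * σ = 5 * N) (r : ℕ) (c : ℝ) :
    ∫ x in Q2, DkerR r (l * σ * (k ⬝ᵥ x + c)) (l * σ * (perp k ⬝ᵥ x)) ^ 2 = 4 * π ^ 2 := by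
  obtain ⟨a, b, rfl, hab⟩ := exists_int_coords_of_mem_Λdir hk
  have hindep : ∀ m n : ℤ, m • ![N * a, N * b] + n • ![-(N * b), N * a] = 0 →
      m = 0 ∧ n = 0 := by
    intro m n h
    have h0 := congrFun h 0
    have h1 := congrFun h 1
    simp only [Pi.add_apply, Pi.smul_apply, smul_eq_mul, Pi.zero_apply, Matrix.cons_val_zero,
      Matrix.cons_val_one] at h0 h1
    have hm : N * (25 * m) = 0 := by linear_combination a * h0 + b * h1 - N * m * hab
    have hn : N * (25 * n) = 0 := by linear_combination a * h1 - b * h0 - N * n * hab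
    simp only [mul_eq_zero, hN, false_or] at hm hn
    omega
  have hphase : ∀ x : Vec2,
      DkerR r (l * σ * (![(a : ℝ) / 5, b / 5] ⬝ᵥ x + c))
          (l * σ * (perp ![(a : ℝ) / 5, b / 5] ⬝ᵥ x))
        = DkerR r (∑ i, ((![N * a, N * b] i : ℤ) : ℝ) * x i + l * σ * c)
            (∑ i, ((![-(N * b), N * a] i : ℤ) : ℝ) * x i + 0) := fun x => by
    simp only [dotProduct, perp, Fin.sum_univ_two, hlσ, Matrix.cons_val_zero,
      Matrix.cons_val_one]
    push_cast
    ring_nf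
  simp_rw [hphase]
  rw [Q2, integral_cube_DkerR_sq r hindep, Fintype.card_fin]
  ring

theorem integral_ηfun_sq {k : Vec2} (hk : k ∈ Λdir) {l σ : ℝ} {N : ℤ} (hN : N ≠ 0)
    (hlσ : l * σ = 5 * N) (r : ℕ) (μ t : ℝ) :
    ∫ x in Q2, ηfun k l σ r μ t x ^ 2 = 4 * π ^ 2 := by
  by_cases hkp : k ∈ Λp
  · simp only [ηfun, if_pos hkp]
    exact integral_DkerR_sq_of_mem_Λdir hk hN hlσ r (μ * t)
  · simp only [ηfun, if_neg hkp]
    exact integral_DkerR_sq_of_mem_Λdir (neg_mem_Λdir hk) hN hlσ r (μ * t)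

theorem average_otC_wflow_wflow_neg {k : Vec2} (hk : k ∈ Λdir) {l σ : ℝ} {N : ℤ} (hN : N ≠ 0)
    (hlσ : l * σ = 5 * N) (r : ℕ) (μ t : ℝ) :
    ((4 * π ^ 2 : ℝ)⁻¹ • ∫ x in Q2, otC (wflow k l σ r μ t x) (wflow (-k) l σ r μ t x))
      = fun i j => ((-ot k k i j : ℝ) : ℂ) := by
  simp_rw [otC_wflow_wflow_neg hk]
  rw [integral_smul_const, integral_ηfun_sq hk hN hlσ, smul_smul,
    inv_mul_cancel₀ (by positivity), one_smul]

theorem statement11_general (r μ : ℕ) (l σ : ℝ)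
    (hlσ : ∃ n : ℕ, 0 < n ∧ l * σ = 5 * n) :
    -- (i) `W` is real valued
    (∀ a : Vec2 → ℂ, (∀ k ∈ Λdir, a (-k) = (starRingEnd ℂ) (a k)) →
      ∀ (t : ℝ) (x : Vec2) (i : Fin 2),
        (∑ k ∈ Λdir, a k * wflow k l σ r (μ : ℝ) t x i).im = 0) ∧
    -- (ii) `⨍ w_k ⊘ w_{−k} dx = −(k ⊘ k)`
    (∀ k ∈ Λdir, ∀ t : ℝ,
      ((4*π^2 : ℝ)⁻¹ •
        ∫ x in Q2, otC (wflow k l σ r (μ : ℝ) t x) (wflow (-k) l σ r (μ : ℝ) t x))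
        = fun i j => ((-(ot k k i j) : ℝ) : ℂ)) ∧
    -- (iii) consequence for the geometric coefficients
    (∀ γ : Vec2 → (Fin 2 → Fin 2 → ℝ) → ℝ,
      (∀ R : Fin 2 → Fin 2 → ℝ, (∀ i j, R i j = R j i) → R 0 0 + R 1 1 = 0 →
        R = ∑ k ∈ Λdir, (γ k R)^2 • ot k k) →
      ∀ R : Fin 2 → Fin 2 → ℝ, (∀ i j, R i j = R j i) → R 0 0 + R 1 1 = 0 →
      ∀ t : ℝ,
        (∑ k ∈ Λdir, (γ k R)^2 •
          ((4*π^2 : ℝ)⁻¹ •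
            ∫ x in Q2, otC (wflow k l σ r (μ : ℝ) t x) (wflow (-k) l σ r (μ : ℝ) t x)))
          = fun i j => ((-(R i j) : ℝ) : ℂ)) := by
  obtain ⟨N, hN, hlσ⟩ := hlσ
  have havg : ∀ k ∈ Λdir, ∀ t : ℝ,
      ((4 * π ^ 2 : ℝ)⁻¹ • ∫ x in Q2, otC (wflow k l σ r μ t x) (wflow (-k) l σ r μ t x))
        = fun i j => ((-ot k k i j : ℝ) : ℂ) := fun k hk t =>
    average_otC_wflow_wflow_neg hk (N := N) (by omega) (by exact_mod_cast hlσ) r μ t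
  refine ⟨fun a ha t x i => im_sum_mul_wflow_eq_zero l σ r μ t ha x i, havg, ?_⟩
  intro γ hγ R hsymm htrace t
  rw [Finset.sum_congr rfl fun k hk => by rw [havg k hk t]]
  conv_rhs => rw [hγ R hsymm htrace]
  ext i j
  simp [Finset.sum_apply]

/-- Reality of `W = Σ_k a_k w_k` for conjugate-symmetric coefficients,
the identity `⨍ w_k ⊘ w_{−k} dx = −(k ⊘ k)`, and the consequence
`Σ_k (γ_k(R))² ⨍ w_k ⊘ w_{−k} dx = −R`. -/
theorem statement11 (r μ : ℕ) (hr : 0 < r) (hμ : 0 < μ) (l σ : ℝ)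
    (hσ : ∃ n : ℕ, 0 < n ∧ σ⁻¹ = (n : ℝ))
    (hl : ∃ n : ℕ, 0 < n ∧ l = 5 * n)
    (hlσ : ∃ n : ℕ, 0 < n ∧ l * σ = 5 * n) :
    -- (i) `W` is real valued
    (∀ a : Vec2 → ℂ, (∀ k ∈ Λdir, a (-k) = (starRingEnd ℂ) (a k)) →
      ∀ (t : ℝ) (x : Vec2) (i : Fin 2),
        (∑ k ∈ Λdir, a k * wflow k l σ r (μ : ℝ) t x i).im = 0) ∧
    -- (ii) `⨍ w_k ⊘ w_{−k} dx = −(k ⊘ k)`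
    (∀ k ∈ Λdir, ∀ t : ℝ,
      ((4*π^2 : ℝ)⁻¹ •
        ∫ x in Q2, otC (wflow k l σ r (μ : ℝ) t x) (wflow (-k) l σ r (μ : ℝ) t x))
        = fun i j => ((-(ot k k i j) : ℝ) : ℂ)) ∧
    -- (iii) consequence for the geometric coefficients
    (∀ γ : Vec2 → (Fin 2 → Fin 2 → ℝ) → ℝ,
      (∀ R : Fin 2 → Fin 2 → ℝ, (∀ i j, R i j = R j i) → R 0 0 + R 1 1 = 0 →
        R = ∑ k ∈ Λdir, (γ k R)^2 • ot k k) →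
      ∀ R : Fin 2 → Fin 2 → ℝ, (∀ i j, R i j = R j i) → R 0 0 + R 1 1 = 0 →
      ∀ t : ℝ,
        (∑ k ∈ Λdir, (γ k R)^2 •
          ((4*π^2 : ℝ)⁻¹ •
            ∫ x in Q2, otC (wflow k l σ r (μ : ℝ) t x) (wflow (-k) l σ r (μ : ℝ) t x)))
          = fun i j => ((-(R i j) : ℝ) : ℂ)) :=
  statement11_general r μ l σ hlσ
end
end
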